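/- Let I be a g-φ-1-absorbing prime ideal of R and let (a, b, c) be a g-φ-1-triple zero of I. If ac ∉ I and bc ∉ I, then ac·I_g ⊆ φ(I), bc·I_g ⊆ φ(I), a·I_g² ⊆ φ(I), b·I_g² ⊆ φ(I) and c·I_g² ⊆ φ(I). -/

import Mathlib

/-- The underlying set of an element of `GI(R) ∪ {∅}`: `none` plays the role of `∅`. -/
def phiSet {ι R : Type*} [AddGroup ι] [DecidableEq ι] [CommRing R]
    (𝒜 : ι → AddSubgroup R) [GradedRing 𝒜]
    (o : Option (HomogeneousIdeal 𝒜)) : Set R :=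
  {x | ∃ J ∈ o, x ∈ J}

/-- `I_g = I ∩ R_g`, the `g`-th graded piece of the graded ideal `I`. -/
def piece {ι R : Type*} [AddGroup ι] [DecidableEq ι] [CommRing R]
    (𝒜 : ι → AddSubgroup R) [GradedRing 𝒜]
    (I : HomogeneousIdeal 𝒜) (g : ι) : Set R :=
  (I.toIdeal : Set R) ∩ (𝒜 g)

/-- `I` is a `g`-`φ`-1-absorbing prime ideal of `R`: `I_g ≠ R_g` and whenever
`a, b, c ∈ R_g` are nonunits with `a*b*c ∈ I - φ(I)`, then `ab ∈ I` or `c ∈ I`. -/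
def IsGPhiOneAbsPrime {ι R : Type*} [AddGroup ι] [DecidableEq ι] [CommRing R]
    (𝒜 : ι → AddSubgroup R) [GradedRing 𝒜] (g : ι)
    (φ : HomogeneousIdeal 𝒜 → Option (HomogeneousIdeal 𝒜)) (I : HomogeneousIdeal 𝒜) : Prop :=
  piece 𝒜 I g ≠ (𝒜 g : Set R) ∧
    ∀ a b c : R, a ∈ 𝒜 g → b ∈ 𝒜 g → c ∈ 𝒜 g → ¬IsUnit a → ¬IsUnit b → ¬IsUnit c →
      a * b * c ∈ I.toIdeal → a * b * c ∉ phiSet 𝒜 (φ I) →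
      a * b ∈ I.toIdeal ∨ c ∈ I.toIdeal

/-- `(a, b, c)` is a `g`-`φ`-1-triple zero of `I`: `a, b, c ∈ R_g` are nonunits with
`abc ∈ φ(I)`, `ab ∉ I` and `c ∉ I`. -/
def IsGPhiTripleZero {ι R : Type*} [AddGroup ι] [DecidableEq ι] [CommRing R]
    (𝒜 : ι → AddSubgroup R) [GradedRing 𝒜] (g : ι)
    (φ : HomogeneousIdeal 𝒜 → Option (HomogeneousIdeal 𝒜)) (I : HomogeneousIdeal 𝒜)
    (a b c : R) : Prop :=
  a ∈ 𝒜 g ∧ b ∈ 𝒜 g ∧ c ∈ 𝒜 g ∧ ¬IsUnit a ∧ ¬IsUnit b ∧ ¬IsUnit c ∧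
    a * b * c ∈ phiSet 𝒜 (φ I) ∧ a * b ∉ I.toIdeal ∧ c ∉ I.toIdeal

/-- `S² `: the set of (finite) sums of products `x*y` with `x, y ∈ S`. -/
def sqSet {R : Type*} [CommRing R] (S : Set R) : Set R :=
  (AddSubmonoid.closure {z : R | ∃ x ∈ S, ∃ y ∈ S, z = x * y} : Set R)

/-!
Perturb the triple zero by elements `x, y ∈ I_g`. The triples `(a, b, c + x)` and
`(a, b + x, c + y)` still consist of nonunits of `R_g` with product in `I`, and the conditions
`ab ∉ I`, `c ∉ I` survive the perturbation, so the absorbing property pushes their products into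
`φ(I)`; subtracting the summands already known to lie in `φ(I)` leaves `abx` and then `a·xy`.
Since `ac ∉ I` and `bc ∉ I`, every permutation of `(a, b, c)` is again a triple zero, which
yields the remaining inclusions.
-/

section OneAbsorbing

variable {R : Type*} [CommRing R] {M : AddSubgroup R} {I J : Ideal R} {a b c : R}

/-- The ungraded form of a `g`-`φ`-1-absorbing prime ideal: `J` stands for `φ(I)` and `M`
for `R_g`. -/
def OneAbsorbingPrimeOn (M : AddSubgroup R) (I J : Ideal R) : Prop :=
  ∀ p q r : R, p ∈ M → q ∈ M → r ∈ M → ¬IsUnit p → ¬IsUnit q → ¬IsUnit r →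
    p * q * r ∈ I → p * q * r ∉ J → p * q ∈ I ∨ r ∈ I

structure IsOneTripleZero (M : AddSubgroup R) (I J : Ideal R) (a b c : R) : Prop where
  left_mem : a ∈ M
  middle_mem : b ∈ M
  right_mem : c ∈ M
  not_isUnit_left : ¬IsUnit a
  not_isUnit_middle : ¬IsUnit b
  not_isUnit_right : ¬IsUnit c
  mul_mem : a * b * c ∈ J
  mul_notMem : a * b ∉ I
  right_notMem : c ∉ I

theorem not_isUnit_of_mul_mem {d u : R} (h : d * u ∈ I) (hd : d ∉ I) : ¬IsUnit u :=
  fun hu => hd ((I.mul_unit_mem_iff_mem hu).1 h)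

/-- The third factor need not be assumed a nonunit: a unit `r` would put `pq` into `I`. -/
theorem OneAbsorbingPrimeOn.mul_mem (habs : OneAbsorbingPrimeOn M I J) {p q r : R}
    (hp : p ∈ M) (hq : q ∈ M) (hr : r ∈ M) (hpu : ¬IsUnit p) (hqu : ¬IsUnit q)
    (hpqr : p * q * r ∈ I) (hpq : p * q ∉ I) (hrI : r ∉ I) : p * q * r ∈ J := by
  by_contra hJ
  exact (habs p q r hp hq hr hpu hqu (not_isUnit_of_mul_mem hpqr hpq) hpqr hJ).elim hpq hrI

namespace IsOneTripleZero

theorem swap_left (h : IsOneTripleZero M I J a b c) : IsOneTripleZero M I J b a c where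
  left_mem := h.middle_mem
  middle_mem := h.left_mem
  right_mem := h.right_mem
  not_isUnit_left := h.not_isUnit_middle
  not_isUnit_middle := h.not_isUnit_left
  not_isUnit_right := h.not_isUnit_right
  mul_mem := mul_comm b a ▸ h.mul_mem
  mul_notMem := mul_comm a b ▸ h.mul_notMem
  right_notMem := h.right_notMem

theorem swap_right (h : IsOneTripleZero M I J a b c) (hac : a * c ∉ I) :
    IsOneTripleZero M I J a c b where
  left_mem := h.left_mem
  middle_mem := h.right_mem
  right_mem := h.middle_mem
  not_isUnit_left := h.not_isUnit_left
  not_isUnit_middle := h.not_isUnit_right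
  not_isUnit_right := h.not_isUnit_middle
  mul_mem := mul_right_comm a b c ▸ h.mul_mem
  mul_notMem := hac
  right_notMem := fun hb => h.mul_notMem (I.mul_mem_left a hb)

theorem mul_mul_mem_of_mem (habs : OneAbsorbingPrimeOn M I J) (hJI : J ≤ I)
    (h : IsOneTripleZero M I J a b c) {x : R} (hx : x ∈ I) (hxM : x ∈ M) : a * b * x ∈ J := by
  have hcx : c + x ∉ I := by
    rw [I.add_mem_iff_left hx]
    exact h.right_notMem
  have hmem : a * b * (c + x) ∈ I := by
    rw [mul_add]
    exact add_mem (hJI h.mul_mem) (I.mul_mem_left _ hx)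
  have key := habs.mul_mem h.left_mem h.middle_mem (add_mem h.right_mem hxM)
    h.not_isUnit_left h.not_isUnit_middle hmem h.mul_notMem hcx
  rw [show a * b * x = a * b * (c + x) - a * b * c by ring]
  exact sub_mem key h.mul_mem

theorem mul_mul_mem_of_mem_of_mem (habs : OneAbsorbingPrimeOn M I J) (hJI : J ≤ I)
    (h : IsOneTripleZero M I J a b c) (h' : IsOneTripleZero M I J a c b) {x y : R}
    (hx : x ∈ I) (hxM : x ∈ M) (hy : y ∈ I) (hyM : y ∈ M) : a * (x * y) ∈ J := by
  have hbx : ¬IsUnit (b + x) := by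
    refine not_isUnit_of_mul_mem ?_ h'.mul_notMem
    rw [mul_add]
    exact add_mem (hJI h'.mul_mem) (I.mul_mem_left _ hx)
  have hmem : a * (b + x) * (c + y) ∈ I := by
    rw [show a * (b + x) * (c + y) = a * b * c + (a * b * y + x * (a * (c + y))) by ring]
    exact add_mem (hJI h.mul_mem) (add_mem (I.mul_mem_left _ hy) (I.mul_mem_right _ hx))
  have habx : a * (b + x) ∉ I := by
    rw [mul_add, I.add_mem_iff_left (I.mul_mem_left a hx)]
    exact h.mul_notMem
  have hcy : c + y ∉ I := by
    rw [I.add_mem_iff_left hy]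
    exact h.right_notMem
  have key := habs.mul_mem h.left_mem (add_mem h.middle_mem hxM) (add_mem h.right_mem hyM)
    h.not_isUnit_left hbx hmem habx hcy
  rw [show a * (x * y) = a * (b + x) * (c + y) - (a * b * c + a * b * y + a * c * x) by ring]
  exact sub_mem key (add_mem (add_mem h.mul_mem (h.mul_mul_mem_of_mem habs hJI hy hyM))
    (h'.mul_mul_mem_of_mem habs hJI hx hxM))

end IsOneTripleZero

end OneAbsorbing

theorem mul_mem_of_forall_mem_sqSet {R : Type*} [CommRing R] {S : Set R} {J : Ideal R} {d : R}
    (h : ∀ x ∈ S, ∀ y ∈ S, d * (x * y) ∈ J) : ∀ z ∈ sqSet S, d * z ∈ J := by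
  have hle : sqSet S ⊆ (J.toAddSubmonoid.comap (AddMonoidHom.mulLeft d) : Set R) :=
    AddSubmonoid.closure_le.2 (by rintro _ ⟨x, hx, y, hy, rfl⟩; exact h x hx y hy)
  exact fun z hz => hle hz

theorem phiSet_eq_of_mem {ι R : Type*} [AddGroup ι] [DecidableEq ι] [CommRing R]
    {𝒜 : ι → AddSubgroup R} [GradedRing 𝒜] {o : Option (HomogeneousIdeal 𝒜)}
    {J : HomogeneousIdeal 𝒜} (hJ : J ∈ o) : phiSet 𝒜 o = (J.toIdeal : Set R) := by
  obtain rfl := Option.mem_def.1 hJ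
  ext x
  simp [phiSet]

theorem stmt8_general {ι R : Type*} [AddGroup ι] [DecidableEq ι] [CommRing R]
    (𝒜 : ι → AddSubgroup R) [GradedRing 𝒜] (g : ι)
    (φ : HomogeneousIdeal 𝒜 → Option (HomogeneousIdeal 𝒜))
    (hφ : ∀ J : HomogeneousIdeal 𝒜, phiSet 𝒜 (φ J) ⊆ (J.toIdeal : Set R))
    (I : HomogeneousIdeal 𝒜) (hI : IsGPhiOneAbsPrime 𝒜 g φ I)
    (a b c : R) (habc : IsGPhiTripleZero 𝒜 g φ I a b c)
    (hac : a * c ∉ I.toIdeal) (hbc : b * c ∉ I.toIdeal) :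
    (∀ x ∈ piece 𝒜 I g, a * c * x ∈ phiSet 𝒜 (φ I)) ∧
    (∀ x ∈ piece 𝒜 I g, b * c * x ∈ phiSet 𝒜 (φ I)) ∧
    (∀ z ∈ sqSet (piece 𝒜 I g), a * z ∈ phiSet 𝒜 (φ I)) ∧
    (∀ z ∈ sqSet (piece 𝒜 I g), b * z ∈ phiSet 𝒜 (φ I)) ∧
    (∀ z ∈ sqSet (piece 𝒜 I g), c * z ∈ phiSet 𝒜 (φ I)) := by
  obtain ⟨ha, hb, hc, hua, hub, huc, habcφ, hab, hcI⟩ := habc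
  obtain ⟨J, hJ, habcJ⟩ := habcφ
  have hP : phiSet 𝒜 (φ I) = (J.toIdeal : Set R) := phiSet_eq_of_mem hJ
  have hJI : J.toIdeal ≤ I.toIdeal := fun x hx => hφ I (hP ▸ hx)
  have habs : OneAbsorbingPrimeOn (𝒜 g) I.toIdeal J.toIdeal :=
    fun p q r hp hq hr hpu hqu hru hpqr hpqrJ => hI.2 p q r hp hq hr hpu hqu hru hpqr (hP ▸ hpqrJ)
  have habc : IsOneTripleZero (𝒜 g) I.toIdeal J.toIdeal a b c :=
    ⟨ha, hb, hc, hua, hub, huc, habcJ, hab, hcI⟩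
  have hacb := habc.swap_right hac
  have hbac := habc.swap_left
  have hbca := hbac.swap_right hbc
  rw [hP]
  refine ⟨fun x hx => hacb.mul_mul_mem_of_mem habs hJI hx.1 hx.2,
    fun x hx => hbca.mul_mul_mem_of_mem habs hJI hx.1 hx.2, ?_, ?_, ?_⟩ <;>
    refine mul_mem_of_forall_mem_sqSet fun x hx y hy => ?_
  · exact habc.mul_mul_mem_of_mem_of_mem habs hJI hacb hx.1 hx.2 hy.1 hy.2
  · exact hbac.mul_mul_mem_of_mem_of_mem habs hJI hbca hx.1 hx.2 hy.1 hy.2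
  · exact hacb.swap_left.mul_mul_mem_of_mem_of_mem habs hJI hbca.swap_left hx.1 hx.2 hy.1 hy.2

/-- If `I` is a `g`-`φ`-1-absorbing prime ideal of `R`, `(a, b, c)` is a
`g`-`φ`-1-triple zero of `I`, and `ac ∉ I`, `bc ∉ I`, then `ac·I_g ⊆ φ(I)`,
`bc·I_g ⊆ φ(I)`, `a·I_g² ⊆ φ(I)`, `b·I_g² ⊆ φ(I)` and `c·I_g² ⊆ φ(I)`. -/
theorem stmt8 {ι R : Type*} [AddGroup ι] [DecidableEq ι] [CommRing R] [Nontrivial R]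
    (𝒜 : ι → AddSubgroup R) [GradedRing 𝒜] (g : ι)
    (φ : HomogeneousIdeal 𝒜 → Option (HomogeneousIdeal 𝒜))
    (hφ : ∀ J : HomogeneousIdeal 𝒜, phiSet 𝒜 (φ J) ⊆ (J.toIdeal : Set R))
    (I : HomogeneousIdeal 𝒜) (hI : IsGPhiOneAbsPrime 𝒜 g φ I)
    (a b c : R) (habc : IsGPhiTripleZero 𝒜 g φ I a b c)
    (hac : a * c ∉ I.toIdeal) (hbc : b * c ∉ I.toIdeal) :
    (∀ x ∈ piece 𝒜 I g, a * c * x ∈ phiSet 𝒜 (φ I)) ∧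
    (∀ x ∈ piece 𝒜 I g, b * c * x ∈ phiSet 𝒜 (φ I)) ∧
    (∀ z ∈ sqSet (piece 𝒜 I g), a * z ∈ phiSet 𝒜 (φ I)) ∧
    (∀ z ∈ sqSet (piece 𝒜 I g), b * z ∈ phiSet 𝒜 (φ I)) ∧
    (∀ z ∈ sqSet (piece 𝒜 I g), c * z ∈ phiSet 𝒜 (φ I)) :=
  stmt8_general 𝒜 g φ hφ I hI a b c habc hac hbc
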